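/- Let p be a prime number. Then the polynomial f_{1,p}(X) = X^{p-1} + 2X^{p-2} + ⋯ + (p-1)X + p is irreducible in ℤ[X]. -/

import Mathlib

/-!
Multiplying by `X - 1` gives `(z - 1) f₁,ₙ(z) = z + z² + ⋯ + zⁿ - n`, so a root `z` with `‖z‖ ≤ 1`
would force `Re zʲ = 1` for all `j`, hence `z = 1`, which is not a root. Thus all complex roots of
`f₁,ₚ` lie outside the closed unit disc. In a factorization `f₁,ₚ = a b` the constant terms
multiply to the prime `p`, so one factor, say `a`, has constant term `±1`; but if `a` were
nonconstant, `|a(0)| = |lc a| · ∏ |roots of a| > 1`.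
-/

open Polynomial

/-- `f1 n = X^(n-1) + 2 X^(n-2) + ⋯ + (n-1) X + n = Σ_{k=1}^n k · X^(n-k)` over `ℤ`. -/
noncomputable def f1 (n : ℕ) : Polynomial ℤ :=
  ∑ k ∈ Finset.Icc 1 n, C (k : ℤ) * X ^ (n - k)

theorem Multiset.one_lt_norm_prod {𝕜 : Type*} [NormedField 𝕜] {s : Multiset 𝕜} (hs : s ≠ 0)
    (h : ∀ z ∈ s, 1 < ‖z‖) : 1 < ‖s.prod‖ := by
  induction s using Multiset.induction_on with
  | empty => exact absurd rfl hs
  | cons a s ih =>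
    have ha : 1 < ‖a‖ := h a (mem_cons_self a s)
    rw [prod_cons, norm_mul]
    rcases eq_or_ne s 0 with rfl | hs'
    · simpa using ha
    · exact one_lt_mul_of_lt_of_le ha (ih hs' fun z hz ↦ h z (mem_cons_of_mem hz)).le

theorem Complex.eq_one_of_sum_eq_card {ι : Type*} {s : Finset ι} {w : ι → ℂ}
    (hw : ∀ i ∈ s, ‖w i‖ ≤ 1) (hsum : ∑ i ∈ s, w i = s.card) : ∀ i ∈ s, w i = 1 := by
  have hre : ∀ i ∈ s, (w i).re = 1 := by
    refine (Finset.sum_eq_sum_iff_of_le fun i hi ↦ (re_le_norm _).trans (hw i hi)).mp ?_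
    simpa using congrArg re hsum
  intro i hi
  have him : (w i).im = 0 := by
    rw [← abs_re_eq_norm]
    linarith [hw i hi, hre i hi, le_abs_self (w i).re, abs_re_le_norm (w i)]
  exact Complex.ext (hre i hi) him

namespace Polynomial

theorem one_lt_norm_coeff_zero_of_one_lt_norm_roots {p : ℂ[X]} (hlc : 1 ≤ ‖p.leadingCoeff‖)
    (hdeg : 0 < p.natDegree) (hroots : ∀ z ∈ p.roots, 1 < ‖z‖) : 1 < ‖p.coeff 0‖ := by
  have hsplit := IsAlgClosed.splits p
  have hne : p.roots ≠ 0 := by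
    rw [← Multiset.card_pos, ← hsplit.natDegree_eq_card_roots]
    exact hdeg
  rw [hsplit.coeff_zero_eq_leadingCoeff_mul_prod_roots, norm_mul, norm_mul, norm_pow, norm_neg,
    norm_one, one_pow, one_mul]
  exact one_lt_mul_of_le_of_lt hlc (Multiset.one_lt_norm_prod hne hroots)

theorem isUnit_of_isUnit_coeff_zero_of_one_lt_norm_roots {a : ℤ[X]} (ha : a ≠ 0)
    (h0 : IsUnit (a.coeff 0)) (hroots : ∀ z : ℂ, aeval z a = 0 → 1 < ‖z‖) : IsUnit a := by
  suffices hdeg : a.natDegree = 0 by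
    obtain ⟨c, rfl⟩ := natDegree_eq_zero.mp hdeg
    exact isUnit_C.mpr (by simpa using h0)
  by_contra! hdeg
  set q := a.map (algebraMap ℤ ℂ)
  have hlc : 1 ≤ ‖q.leadingCoeff‖ := by
    rw [leadingCoeff_map_of_injective (RingHom.injective_int _), algebraMap_int_eq, eq_intCast,
      Complex.norm_intCast]
    exact_mod_cast Int.one_le_abs (leadingCoeff_ne_zero.mpr ha)
  have hq0 : ‖q.coeff 0‖ = 1 := by
    rcases Int.isUnit_iff.mp h0 with h | h <;> simp [q, h]
  have hqdeg : 0 < q.natDegree := by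
    rwa [natDegree_map_eq_of_injective (RingHom.injective_int _), Nat.pos_iff_ne_zero]
  exact (one_lt_norm_coeff_zero_of_one_lt_norm_roots hlc hqdeg
    fun z hz ↦ hroots z (mem_aroots.mp hz).2).ne' hq0

theorem irreducible_of_prime_coeff_zero_of_one_lt_norm_roots {f : ℤ[X]} (hf : Prime (f.coeff 0))
    (hroots : ∀ z : ℂ, aeval z f = 0 → 1 < ‖z‖) : Irreducible f := by
  refine ⟨fun hu ↦ hf.not_isUnit ?_, fun a b hab ↦ ?_⟩
  · obtain ⟨r, hr, rfl⟩ := isUnit_iff.mp hu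
    simpa using hr
  have hab0 : a * b ≠ 0 := hab ▸ fun h ↦ hf.ne_zero (by simp [h])
  rw [hab, mul_coeff_zero] at hf
  refine (hf.irreducible.isUnit_or_isUnit rfl).imp (fun h ↦ ?_) (fun h ↦ ?_)
  · exact isUnit_of_isUnit_coeff_zero_of_one_lt_norm_roots (left_ne_zero_of_mul hab0) h
      fun z hz ↦ hroots z (by simp [hab, hz])
  · exact isUnit_of_isUnit_coeff_zero_of_one_lt_norm_roots (right_ne_zero_of_mul hab0) h
      fun z hz ↦ hroots z (by simp [hab, hz])

end Polynomial

theorem f1_succ (n : ℕ) : f1 (n + 1) = X * f1 n + C ((n : ℤ) + 1) := by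
  rw [f1, Finset.sum_Icc_succ_top (by omega), f1, Finset.mul_sum, Nat.sub_self, pow_zero, mul_one]
  push_cast
  congr 1
  refine Finset.sum_congr rfl fun k hk ↦ ?_
  rw [show n + 1 - k = n - k + 1 by rw [Finset.mem_Icc] at hk; omega, pow_succ]
  ring

theorem coeff_f1_zero (n : ℕ) : (f1 n).coeff 0 = n := by
  cases n with
  | zero => simp [f1]
  | succ n => simp [f1_succ]

theorem two_mul_eval_one_f1 (n : ℕ) : 2 * (f1 n).eval 1 = n * (n + 1) := by
  induction n with
  | zero => simp [f1]
  | succ n ih =>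
    simp only [f1_succ, eval_add, eval_mul, eval_X, eval_C, one_mul]
    push_cast
    linear_combination ih

theorem X_sub_one_mul_f1 (n : ℕ) :
    (X - 1) * f1 n = X * ∑ i ∈ Finset.range n, X ^ i - C (n : ℤ) := by
  induction n with
  | zero => simp [f1]
  | succ n ih =>
    rw [f1_succ, geom_sum_succ]
    push_cast
    simp only [C_add, C_1]
    linear_combination X * ih

theorem one_lt_norm_of_aeval_f1_eq_zero {n : ℕ} (hn : 0 < n) {z : ℂ} (hz : aeval z (f1 n) = 0) :
    1 < ‖z‖ := by
  by_contra! hle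
  have hsum : ∑ i ∈ Finset.range n, z ^ (i + 1) = (Finset.range n).card := by
    have := congrArg (aeval z) (X_sub_one_mul_f1 n)
    simp only [map_mul, map_sub, hz, map_sum, map_pow, aeval_X, mul_zero, map_natCast] at this
    simp only [pow_succ', ← Finset.mul_sum, Finset.card_range]
    linear_combination -this
  have hz1 : z = 1 := by
    simpa using Complex.eq_one_of_sum_eq_card
      (fun i _ ↦ (norm_pow z _).trans_le (pow_le_one₀ (norm_nonneg z) hle)) hsum 0
      (Finset.mem_range.mpr hn)
  rw [hz1, aeval_def, eval₂_at_one, map_eq_zero_iff _ (RingHom.injective_int _)] at hz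
  have hgauss := two_mul_eval_one_f1 n
  rw [hz, mul_zero] at hgauss
  have : (0 : ℤ) < n * (n + 1) := by positivity
  omega

/-- If `p` is prime, then `f1 p = X^(p-1) + 2X^(p-2) + ⋯ + (p-1)X + p` is
irreducible in `ℤ[X]`. -/
theorem stmt5 (p : ℕ) (hp : p.Prime) : Irreducible (f1 p) := by
  refine irreducible_of_prime_coeff_zero_of_one_lt_norm_roots ?_
    fun z ↦ one_lt_norm_of_aeval_f1_eq_zero hp.pos
  rw [coeff_f1_zero]
  exact Nat.prime_iff_prime_int.mp hp
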